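/- Let X be a compact metric space and f : X → X continuous. For x ∈ X, the special α-limit set sα(x) is nonempty if and only if x ∈ ⋂_{n≥0} f^n(X). -/

import Mathlib

/-!
A backward branch of `x` witnesses `x ∈ f^[n] '' univ` for every `n`. Conversely, on a compact
Hausdorff space the eventual image `K = ⋂ n, range f^[n]` satisfies `K ⊆ f '' K`: the preimages of
a point `y ∈ K` inside `range f^[n]` form a decreasing sequence of nonempty compact sets, so by
Cantor's intersection theorem some preimage lies in every `range f^[n]`. Choosing such preimages
repeatedly yields a backward branch of `x` inside `K`, and compactness gives it a cluster point.
-/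

open Filter Topology Set

/-- A backward orbit branch of `x`: `u 0 = x` and `f (u (n+1)) = u n`. -/
def IsBackwardBranch {X : Type*} (f : X → X) (x : X) (u : ℕ → X) : Prop :=
  u 0 = x ∧ ∀ n, f (u (n + 1)) = u n

/-- The special α-limit set of `x`: accumulation points of backward orbit branches. -/
def sAlpha {X : Type*} [TopologicalSpace X] (f : X → X) (x : X) : Set X :=
  {y | ∃ u : ℕ → X, IsBackwardBranch f x u ∧ MapClusterPt y atTop u}

/-- The α-limit set of `x`: accumulation points of preimage sequences. -/
def alphaLimit {X : Type*} [TopologicalSpace X] (f : X → X) (x : X) : Set X :=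
  {y | ∃ u : ℕ → X, (∀ n, f^[n] (u n) = x) ∧ MapClusterPt y atTop u}

section BackwardBranch

variable {X : Type*} {f : X → X}

theorem range_iterate_succ_subset (f : X → X) (n : ℕ) : range f^[n + 1] ⊆ range f^[n] :=
  fun _ ⟨w, hw⟩ => ⟨f w, hw⟩

theorem IsBackwardBranch.iterate_apply {x : X} {u : ℕ → X} (hu : IsBackwardBranch f x u)
    (n : ℕ) : f^[n] (u n) = x := by
  induction n with
  | zero => exact hu.1
  | succ n ih => rw [Function.iterate_succ_apply, hu.2 n, ih]

theorem IsBackwardBranch.mem_iInter_range_iterate {x : X} {u : ℕ → X}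
    (hu : IsBackwardBranch f x u) : x ∈ ⋂ n, range f^[n] :=
  mem_iInter.2 fun n => ⟨u n, hu.iterate_apply n⟩

theorem exists_isBackwardBranch_of_subset_image {s : Set X} (hs : s ⊆ f '' s) {x : X}
    (hx : x ∈ s) : ∃ u, IsBackwardBranch f x u ∧ ∀ n, u n ∈ s := by
  choose g hgs hfg using fun z : s => hs z.2
  let g' : s → s := fun z => ⟨g z, hgs z⟩
  refine ⟨fun n => (g'^[n] ⟨x, hx⟩).1, ⟨rfl, fun n => ?_⟩, fun n => (g'^[n] ⟨x, hx⟩).2⟩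
  dsimp only
  rw [Function.iterate_succ_apply']
  exact hfg _

theorem iInter_range_iterate_subset_image [TopologicalSpace X] [CompactSpace X] [T2Space X]
    (hf : Continuous f) : ⋂ n, range f^[n] ⊆ f '' ⋂ n, range f^[n] := by
  intro y hy
  set t : ℕ → Set X := fun n => f ⁻¹' {y} ∩ range f^[n]
  have ht_closed (n : ℕ) : IsClosed (t n) :=
    (isClosed_singleton.preimage hf).inter (isCompact_range (hf.iterate n)).isClosed
  have ht_nonempty (n : ℕ) : (t n).Nonempty := by
    obtain ⟨w, hw⟩ := mem_iInter.1 hy (n + 1)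
    refine ⟨f^[n] w, ?_, w, rfl⟩
    rwa [mem_preimage, ← Function.iterate_succ_apply' f n w, mem_singleton_iff]
  obtain ⟨z, hz⟩ := IsCompact.nonempty_iInter_of_sequence_nonempty_isCompact_isClosed t
    (fun n => inter_subset_inter_right _ (range_iterate_succ_subset f n)) ht_nonempty
    (ht_closed 0).isCompact ht_closed
  exact ⟨z, mem_iInter.2 fun n => (mem_iInter.1 hz n).2, (mem_iInter.1 hz 0).1⟩

theorem sAlpha_nonempty_iff_exists_isBackwardBranch [TopologicalSpace X] [CompactSpace X]
    {x : X} : (sAlpha f x).Nonempty ↔ ∃ u, IsBackwardBranch f x u := by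
  refine ⟨fun ⟨_, u, hu, _⟩ => ⟨u, hu⟩, fun ⟨u, hu⟩ => ?_⟩
  obtain ⟨y, hy⟩ := exists_clusterPt_of_compactSpace (map u atTop)
  exact ⟨y, u, hu, hy⟩

end BackwardBranch

theorem stmt11 {X : Type*} [MetricSpace X] [CompactSpace X] (f : X → X)
    (hf : Continuous f) (x : X) :
    (sAlpha f x).Nonempty ↔ x ∈ ⋂ n : ℕ, f^[n] '' Set.univ := by
  simp only [image_univ, sAlpha_nonempty_iff_exists_isBackwardBranch]
  refine ⟨fun ⟨u, hu⟩ => hu.mem_iInter_range_iterate, fun hx => ?_⟩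
  obtain ⟨u, hu, -⟩ := exists_isBackwardBranch_of_subset_image
    (iInter_range_iterate_subset_image hf) hx
  exact ⟨u, hu⟩
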